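/- arXiv:2010.00285 — 2 statements merged into one kernel-verified Lean document; each statement's English description precedes it below -/
import Mathlib

section
/- For each n ≥ 0 and 0 ≤ k ≤ n, define P^n_k(x,y) = (1/√π) U_n(x cos(ω) + y sin(ω)) with ω = kπ/(n+1), where U_n is the Chebyshev polynomial of the second kind. Then these functions form an orthonormal family on the unit disk D = {(x,y) : x² + y² ≤ 1} with respect to the Lebesgue measure: ∫_D P^n_k P^{n'}_{k'} dx dy = δ_{nn'} δ_{kk'}. -/
/-!
Rotating the disk by `ω = kπ/(n+1)` turns the integrand into `U_n(x) U_{n'}(x cos θ + y sin θ)`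
with `θ = ω' - ω`. On each vertical chord `|y| ≤ √(1 - x²)` the second factor has the
antiderivative `T_{n'+1}(⋯) / ((n'+1) sin θ)`, and writing `x = cos φ` the chord integral becomes
`2/(n'+1) · √(1 - x²) U_{n'}(x) U_{n'}(cos θ)`. The disk integral is therefore
`2/(n'+1) · U_{n'}(cos θ)` times the weighted integral `∫ U_n U_{n'} √(1 - x²) = π/2 · δ_{nn'}`,
and for `n = n'` the factor `U_n(cos ((k' - k)π/(n+1)))` equals `(n+1) δ_{kk'}` because
`U_n(cos θ) sin θ = sin ((n+1)θ)`.
-/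

open Real MeasureTheory Polynomial Polynomial.Chebyshev

theorem integral_cos_intCast_mul_zero_pi (j : ℤ) :
    ∫ x in (0 : ℝ)..π, cos (j * x) = if j = 0 then π else 0 := by
  split_ifs with hj
  · simp [hj]
  · have hj' : (j : ℝ) ≠ 0 := by exact_mod_cast hj
    rw [intervalIntegral.integral_comp_mul_left (fun x => cos x) hj']
    simp [integral_cos, sin_int_mul_pi]

theorem integral_sin_mul_sin_zero_pi (a b : ℕ) :
    ∫ x in (0 : ℝ)..π, sin ((a + 1) * x) * sin ((b + 1) * x) = if a = b then π / 2 else 0 := by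
  have product_to_sum : ∀ x : ℝ, sin ((a + 1) * x) * sin ((b + 1) * x)
      = (cos (((a - b : ℤ) : ℝ) * x) - cos (((a + b + 2 : ℤ) : ℝ) * x)) / 2 := by
    intro x
    rw [cos_sub_cos]
    push_cast
    rw [show ((a - b) * x + (a + b + 2) * x) / 2 = (a + 1) * x by ring,
      show ((a - b) * x - (a + b + 2) * x) / 2 = -((b + 1) * x) by ring, sin_neg]
    ring
  simp_rw [product_to_sum]
  rw [intervalIntegral.integral_div,
    intervalIntegral.integral_sub (Continuous.intervalIntegrable (by fun_prop) _ _)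
      (Continuous.intervalIntegrable (by fun_prop) _ _),
    integral_cos_intCast_mul_zero_pi, integral_cos_intCast_mul_zero_pi,
    if_neg (show (a + b + 2 : ℤ) ≠ 0 by omega)]
  simp only [sub_eq_zero, Nat.cast_inj]
  split_ifs <;> ring

theorem integral_U_mul_U_mul_sqrt (n m : ℕ) :
    ∫ x in (-1 : ℝ)..1, (U ℝ n).eval x * (U ℝ m).eval x * √(1 - x ^ 2)
      = if n = m then π / 2 else 0 := by
  have hsub := intervalIntegral.integral_comp_mul_deriv (a := π) (b := 0)
    (fun x _ => hasDerivAt_cos x) (by fun_prop)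
    (by fun_prop : Continuous fun x : ℝ => (U ℝ n).eval x * (U ℝ m).eval x * √(1 - x ^ 2))
  rw [cos_pi, cos_zero] at hsub
  rw [← hsub, intervalIntegral.integral_symm, ← intervalIntegral.integral_neg,
    ← integral_sin_mul_sin_zero_pi]
  refine intervalIntegral.integral_congr fun x hx => ?_
  rw [Set.uIcc_of_le pi_pos.le] at hx
  have hsqrt : √(1 - cos x ^ 2) = sin x := by
    rw [← sin_sq, sqrt_sq (sin_nonneg_of_mem_Icc hx)]
  have hUn := U_real_cos x n
  have hUm := U_real_cos x m
  push_cast at hUn hUm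
  simp only [Function.comp_apply, hsqrt, ← hUn, ← hUm]
  ring

theorem U_eval_cos_intCast_mul_pi_div (n : ℕ) (j : ℤ) (hj : |j| ≤ n) :
    (U ℝ n).eval (cos (j * π / (n + 1))) = if j = 0 then (n + 1 : ℝ) else 0 := by
  split_ifs with hj0
  · simp [hj0, U_eval_one]
  set θ := (j : ℝ) * π / (n + 1)
  have hθ : |θ| < π := by
    have hj' : |(j : ℝ)| < n + 1 := by exact_mod_cast hj.trans_lt (by omega)
    have hn : (0 : ℝ) < n + 1 := by positivity
    rw [abs_div, abs_mul, abs_of_pos pi_pos, abs_of_pos hn, div_lt_iff₀ hn]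
    nlinarith [pi_pos]
  have hsin : sin θ ≠ 0 := by
    rw [Ne, sin_eq_zero_iff_of_lt_of_lt (neg_lt_of_abs_lt hθ) (lt_of_abs_lt hθ)]
    simp [θ, hj0, pi_ne_zero, Nat.cast_add_one_ne_zero]
  have hU := U_real_cos θ n
  rw [show ((n : ℤ) + 1 : ℝ) * θ = j * π by simp only [θ]; push_cast; field_simp,
    sin_int_mul_pi] at hU
  exact (mul_eq_zero.mp hU).resolve_right hsin

theorem hasDerivAt_T_eval_succ_div (m : ℕ) (a b : ℝ) (hb : b ≠ 0) (y : ℝ) :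
    HasDerivAt (fun y => (T ℝ (m + 1)).eval (a + y * b) / ((m + 1) * b))
      ((U ℝ m).eval (a + y * b)) y := by
  have hlin : HasDerivAt (fun y : ℝ => a + y * b) b y := by
    simpa using ((hasDerivAt_id y).mul_const b).const_add a
  have hT := (((T ℝ (m + 1)).hasDerivAt (a + y * b)).comp y hlin).div_const ((m + 1) * b)
  refine hT.congr_deriv ?_
  rw [T_derivative_eq_U]
  simp only [eval_mul, eval_intCast, add_sub_cancel_right]
  push_cast
  field_simp

theorem integral_U_eval_chord_of_sin_ne_zero (m : ℕ) {θ t : ℝ} (hθ : sin θ ≠ 0)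
    (ht : t ∈ Set.Icc (-1) 1) :
    ∫ y in -√(1 - t ^ 2)..√(1 - t ^ 2), (U ℝ m).eval (t * cos θ + y * sin θ)
      = 2 / (m + 1) * √(1 - t ^ 2) * (U ℝ m).eval t * (U ℝ m).eval (cos θ) := by
  rw [intervalIntegral.integral_eq_sub_of_hasDerivAt
    (fun y _ => hasDerivAt_T_eval_succ_div m _ _ hθ y)
    (Continuous.intervalIntegrable (by fun_prop) _ _)]
  -- Write `t = cos φ`; the endpoints of the chord become `cos (φ ∓ θ)`.
  set φ := arccos t
  have hcos : cos φ = t := cos_arccos ht.1 ht.2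
  have hsin : sin φ = √(1 - t ^ 2) := sin_arccos t
  have hUφ := U_real_cos φ m
  have hUθ := U_real_cos θ m
  rw [hcos, hsin] at hUφ
  push_cast at hUφ hUθ
  have hright : t * cos θ + √(1 - t ^ 2) * sin θ = cos (φ - θ) := by rw [cos_sub, hcos, hsin]
  have hleft : t * cos θ + -√(1 - t ^ 2) * sin θ = cos (φ + θ) := by
    rw [cos_add, hcos, hsin]
    ring
  rw [hright, hleft, T_real_cos, T_real_cos, div_sub_div_same]
  push_cast
  rw [cos_sub_cos, show ((m + 1) * (φ - θ) + (m + 1) * (φ + θ)) / 2 = (m + 1) * φ by ring,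
    show ((m + 1) * (φ - θ) - (m + 1) * (φ + θ)) / 2 = -((m + 1) * θ) by ring, sin_neg,
    ← hUφ, ← hUθ]
  field_simp

theorem integral_U_eval_chord (m : ℕ) (θ : ℝ) {t : ℝ} (ht : t ∈ Set.Icc (-1) 1) :
    ∫ y in -√(1 - t ^ 2)..√(1 - t ^ 2), (U ℝ m).eval (t * cos θ + y * sin θ)
      = 2 / (m + 1) * √(1 - t ^ 2) * (U ℝ m).eval t * (U ℝ m).eval (cos θ) := by
  rcases ne_or_eq (sin θ) 0 with hθ | hθ
  · exact integral_U_eval_chord_of_sin_ne_zero m hθ ht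
  have hcos : cos θ = 1 ∨ cos θ = -1 := sq_eq_one_iff.mp (by nlinarith [sin_sq_add_cos_sq θ])
  simp only [hθ, mul_zero, add_zero, intervalIntegral.integral_const, smul_eq_mul]
  rcases hcos with h | h <;>
    simp only [h, mul_one, mul_neg, U_eval_one, U_eval_neg, Int.cast_negOnePow_natCast] <;>
    push_cast <;> field_simp <;> ring

abbrev unitDisk : Set (ℝ × ℝ) := {q | q.1 ^ 2 + q.2 ^ 2 ≤ 1}

theorem measurableSet_unitDisk : MeasurableSet unitDisk :=
  (isClosed_le (by fun_prop) continuous_const).measurableSet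

theorem isCompact_unitDisk : IsCompact unitDisk := by
  refine (isCompact_Icc (a := ((-1 : ℝ), (-1 : ℝ))) (b := (1, 1))).of_isClosed_subset
    (isClosed_le (by fun_prop) continuous_const) fun p hp => ?_
  simp only [Set.mem_ofPred_eq] at hp
  refine ⟨⟨?_, ?_⟩, ?_, ?_⟩ <;> dsimp <;> nlinarith

noncomputable def planeRotation (θ : ℝ) : (ℝ × ℝ) ≃ᵐ (ℝ × ℝ) :=
  (Complex.measurableEquivRealProd.symm.trans
    (rotation (Circle.exp θ)).toHomeomorph.toMeasurableEquiv).trans Complex.measurableEquivRealProd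

theorem measurePreserving_planeRotation (θ : ℝ) :
    MeasurePreserving (planeRotation θ) volume volume :=
  (Complex.volume_preserving_equiv_real_prod.comp (rotation (Circle.exp θ)).measurePreserving).comp
    Complex.volume_preserving_equiv_real_prod.symm

theorem planeRotation_apply (θ : ℝ) (p : ℝ × ℝ) :
    planeRotation θ p = (p.1 * cos θ - p.2 * sin θ, p.1 * sin θ + p.2 * cos θ) := by
  simp only [planeRotation, MeasurableEquiv.trans_apply, Homeomorph.toMeasurableEquiv_coe,
    LinearIsometryEquiv.coe_toHomeomorph, rotation_apply]
  ext <;> simp [Complex.measurableEquivRealProd, Circle.coe_exp, Complex.exp_ofReal_mul_I_re,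
    Complex.exp_ofReal_mul_I_im] <;> ring

theorem planeRotation_preimage_unitDisk (θ : ℝ) : planeRotation θ ⁻¹' unitDisk = unitDisk := by
  ext p
  simp only [Set.mem_preimage, Set.mem_ofPred_eq, planeRotation_apply]
  constructor <;> intro hp <;> nlinarith [sin_sq_add_cos_sq θ]

theorem setIntegral_unitDisk_comp_planeRotation (θ : ℝ) (f : ℝ × ℝ → ℝ) :
    ∫ p in unitDisk, f (planeRotation θ p) = ∫ p in unitDisk, f p := by
  have h := (measurePreserving_planeRotation θ).setIntegral_preimage_emb
    (planeRotation θ).measurableEmbedding f unitDisk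
  rwa [planeRotation_preimage_unitDisk] at h

theorem planeRotation_fst_mul_cos_add_snd_mul_sin (θ α : ℝ) (p : ℝ × ℝ) :
    (planeRotation θ p).1 * cos α + (planeRotation θ p).2 * sin α
      = p.1 * cos (α - θ) + p.2 * sin (α - θ) := by
  rw [planeRotation_apply, cos_sub, sin_sub]
  ring

theorem setIntegral_sq_add_sq_le_one (x : ℝ) (g : ℝ → ℝ) :
    ∫ y in {y : ℝ | x ^ 2 + y ^ 2 ≤ 1}, g y = ∫ y in -√(1 - x ^ 2)..√(1 - x ^ 2), g y := by
  rcases le_or_gt 0 (1 - x ^ 2) with hx | hx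
  · have hset : {y : ℝ | x ^ 2 + y ^ 2 ≤ 1} = Set.Icc (-√(1 - x ^ 2)) √(1 - x ^ 2) := by
      ext y
      rw [Set.mem_ofPred_eq, Set.mem_Icc, ← Real.sq_le hx]
      constructor <;> intro h <;> linarith
    rw [hset, integral_Icc_eq_integral_Ioc,
      intervalIntegral.integral_of_le (neg_le_self (sqrt_nonneg _))]
  · have hset : {y : ℝ | x ^ 2 + y ^ 2 ≤ 1} = ∅ :=
      Set.eq_empty_of_forall_notMem fun y hy => by nlinarith [hy.out, sq_nonneg y]
    simp [hset, sqrt_eq_zero_of_nonpos hx.le]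

theorem setIntegral_unitDisk_eq_intervalIntegral {f : ℝ × ℝ → ℝ} (hf : Continuous f) :
    ∫ p in unitDisk, f p = ∫ x in (-1 : ℝ)..1, ∫ y in -√(1 - x ^ 2)..√(1 - x ^ 2), f (x, y) := by
  have hint : Integrable (unitDisk.indicator f) :=
    (integrable_indicator_iff measurableSet_unitDisk).mpr
      (hf.continuousOn.integrableOn_compact isCompact_unitDisk)
  have hslice : ∀ x : ℝ, ∫ y, unitDisk.indicator f (x, y)
      = ∫ y in -√(1 - x ^ 2)..√(1 - x ^ 2), f (x, y) := fun x => by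
    rw [← setIntegral_sq_add_sq_le_one,
      ← integral_indicator (measurableSet_le (by fun_prop) (by fun_prop))]
    rfl
  rw [← integral_indicator measurableSet_unitDisk, Measure.volume_eq_prod,
    integral_prod _ (by rwa [← Measure.volume_eq_prod]),
    intervalIntegral.integral_of_le (by norm_num)]
  simp only [hslice]
  refine (setIntegral_eq_integral_of_forall_compl_eq_zero fun x hx => ?_).symm
  rw [sqrt_eq_zero_of_nonpos]
  · simp
  · simp only [Set.mem_Ioc, not_and_or, not_lt, not_le] at hx
    rcases hx with hx | hx <;> nlinarith

theorem setIntegral_unitDisk_U_mul_U_ridge (n m : ℕ) (θ : ℝ) :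
    ∫ p in unitDisk, (U ℝ n).eval p.1 * (U ℝ m).eval (p.1 * cos θ + p.2 * sin θ)
      = if n = m then π / (n + 1) * (U ℝ n).eval (cos θ) else 0 := by
  rw [setIntegral_unitDisk_eq_intervalIntegral (by fun_prop)]
  have hinner : Set.EqOn
      (fun x => ∫ y in -√(1 - x ^ 2)..√(1 - x ^ 2),
        (U ℝ n).eval x * (U ℝ m).eval (x * cos θ + y * sin θ))
      (fun x => 2 / (m + 1) * (U ℝ m).eval (cos θ) *
        ((U ℝ n).eval x * (U ℝ m).eval x * √(1 - x ^ 2)))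
      (Set.uIcc (-1) 1) := fun x hx => by
    rw [Set.uIcc_of_le (by norm_num)] at hx
    simp only [intervalIntegral.integral_const_mul, integral_U_eval_chord m θ hx]
    ring
  rw [intervalIntegral.integral_congr hinner, intervalIntegral.integral_const_mul,
    integral_U_mul_U_mul_sqrt]
  split_ifs with h
  · subst h
    field_simp
  · simp

/-- orthonormality on the unit disk of the functions
`P^n_k(x,y) = (1/√π) U_n(x cos ω + y sin ω)`, `ω = kπ/(n+1)`, where `U_n` is the
Chebyshev polynomial of the second kind: their pairwise integrals over the unit disk
(with Lebesgue measure) equal `δ_{nn'} δ_{kk'}`. -/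
theorem stmt_3 (n n' k k' : ℕ) (hk : k ≤ n) (hk' : k' ≤ n') :
    (∫ p in {q : ℝ × ℝ | q.1 ^ 2 + q.2 ^ 2 ≤ 1},
        ((1 / Real.sqrt π) *
          (Polynomial.Chebyshev.U ℝ (n : ℤ)).eval
            (p.1 * Real.cos ((k : ℝ) * π / ((n : ℝ) + 1)) +
             p.2 * Real.sin ((k : ℝ) * π / ((n : ℝ) + 1)))) *
        ((1 / Real.sqrt π) *
          (Polynomial.Chebyshev.U ℝ (n' : ℤ)).eval
            (p.1 * Real.cos ((k' : ℝ) * π / ((n' : ℝ) + 1)) +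
             p.2 * Real.sin ((k' : ℝ) * π / ((n' : ℝ) + 1)))))
      = if n = n' ∧ k = k' then 1 else 0 := by
  set ω := (k : ℝ) * π / (n + 1)
  set ω' := (k' : ℝ) * π / (n' + 1)
  have hnormalize : ∀ a b : ℝ, 1 / √π * a * (1 / √π * b) = π⁻¹ * (a * b) := fun a b => by
    field_simp
    rw [sq_sqrt pi_pos.le]
    ring
  simp only [hnormalize]
  rw [integral_const_mul, ← setIntegral_unitDisk_comp_planeRotation ω]
  simp only [planeRotation_fst_mul_cos_add_snd_mul_sin, sub_self, cos_zero, sin_zero, mul_one,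
    mul_zero, add_zero]
  rw [setIntegral_unitDisk_U_mul_U_ridge]
  rcases eq_or_ne n n' with rfl | hn
  · have hθ : ω' - ω = ((k' - k : ℤ) : ℝ) * π / (n + 1) := by simp only [ω, ω']; push_cast; ring
    rw [if_pos rfl, hθ, U_eval_cos_intCast_mul_pi_div n _ (by rw [abs_le]; omega)]
    simp only [sub_eq_zero, Nat.cast_inj, true_and, eq_comm (a := k')]
    split_ifs
    · field_simp
    · simp
  · simp [hn]
end

section
/- Supremizer enrichment preserves the inf-sup constant: let X ∈ ℝ^{n×n} be symmetric positive definite, D ∈ ℝ^{m×n}, and let V_p = [η_1|...|η_{N_p}] ∈ ℝ^{m×N_p} be a matrix of reduced pressure modes with full column rank. Define the supremizers s_l ∈ ℝ^n by X s_l = D^T η_l, and let the reduced velocity space contain span{s_1,...,s_{N_p}}. Then the reduced inf-sup constant β^N := inf_{q ∈ ℝ^{N_p}, q ≠ 0} sup_{v in the reduced velocity space, v ≠ 0} (q^T V_p^T D v)/(‖v‖_X ‖V_p q‖_{X_p}) satisfies β^N ≥ β^h, where β^h := inf_{q ∈ range(V_p), q ≠ 0} sup_{v ∈ ℝ^n,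 v ≠ 0} (q^T D v)/(‖v‖_X ‖q‖_{X_p}) is the full-order inf-sup constant restricted to the reduced pressure space, and X_p is a symmetric positive definite pressure norm matrix. -/
/-!
The supremizer `s` of a pressure `p` (`X s = Dᵀ p`) represents `v ↦ pᵀ D v` in the `X`-inner
product, so by Cauchy–Schwarz `pᵀ D v ≤ ‖s‖_X ‖v‖_X`, with equality at `v = s`. Hence the
full-order supremum at `p = V_p q` equals `‖s‖_X / ‖p‖_{X_p}` and is already attained in any
velocity space containing `s = ∑ q_l s_l`. Since `V_p q ≠ 0` for `q ≠ 0`, every term of the infimum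
defining `β^N` dominates a term of the infimum defining `β^h`.
-/

open Matrix

namespace Matrix

variable {m n ι : Type*} [Fintype m] [Fintype n] [Fintype ι]

lemma IsSymm.dotProduct_mulVec_comm {X : Matrix n n ℝ} (hX : X.IsSymm) (u v : n → ℝ) :
    v ⬝ᵥ X *ᵥ u = u ⬝ᵥ X *ᵥ v := by
  rw [dotProduct_mulVec, ← mulVec_transpose, hX.eq, dotProduct_comm]

lemma PosSemidef.dotProduct_mulVec_le_sqrt_mul_sqrt {X : Matrix n n ℝ} (hX : X.PosSemidef)
    (u v : n → ℝ) : u ⬝ᵥ X *ᵥ v ≤ √(u ⬝ᵥ X *ᵥ u) * √(v ⬝ᵥ X *ᵥ v) := by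
  classical
  have h := LinearMap.BilinForm.apply_mul_apply_le_of_forall_zero_le (toLinearMap₂' ℝ X)
    (fun x => by simpa [toLinearMap₂'_apply'] using hX.dotProduct_mulVec_nonneg x) u v
  simp only [toLinearMap₂'_apply',
    (isHermitian_iff_isSymm.mp hX.isHermitian).dotProduct_mulVec_comm u v, ← sq] at h
  rw [← Real.sqrt_mul (by simpa using hX.dotProduct_mulVec_nonneg u)]
  exact (le_abs_self _).trans (Real.abs_le_sqrt h)

lemma dotProduct_mulVec_eq_of_mulVec_eq {X : Matrix n n ℝ} (hX : X.IsSymm) {D : Matrix m n ℝ}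
    {p : m → ℝ} {s : n → ℝ} (hs : X *ᵥ s = Dᵀ *ᵥ p) (v : n → ℝ) :
    p ⬝ᵥ D *ᵥ v = s ⬝ᵥ X *ᵥ v := by
  rw [dotProduct_mulVec, ← mulVec_transpose, ← hs, dotProduct_comm, hX.dotProduct_mulVec_comm]

lemma mulVec_sum_smul_of_mulVec_eq {X : Matrix n n ℝ} {D : Matrix m n ℝ} {P : Matrix m ι ℝ}
    {s : ι → n → ℝ} (hs : ∀ l, X *ᵥ s l = Dᵀ *ᵥ (fun i => P i l)) (q : ι → ℝ) :
    X *ᵥ ∑ l, q l • s l = Dᵀ *ᵥ (P *ᵥ q) := by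
  rw [mulVec_eq_sum q P]
  simp only [op_smul_eq_smul, mulVec_sum, mulVec_smul, hs]
  rfl

lemma dotProduct_transpose_mul_mulVec (A : Matrix m ι ℝ) (B : Matrix m n ℝ) (q : ι → ℝ)
    (v : n → ℝ) : q ⬝ᵥ (Aᵀ * B) *ᵥ v = A *ᵥ q ⬝ᵥ B *ᵥ v := by
  rw [← mulVec_mulVec, dotProduct_mulVec, vecMul_transpose]

lemma dotProduct_mulVec_neg_div (X : Matrix n n ℝ) (D : Matrix m n ℝ) (p : m → ℝ) (c : ℝ)
    (v : n → ℝ) :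
    p ⬝ᵥ D *ᵥ -v / (√(-v ⬝ᵥ X *ᵥ -v) * c) = -(p ⬝ᵥ D *ᵥ v / (√(v ⬝ᵥ X *ᵥ v) * c)) := by
  simp only [mulVec_neg, dotProduct_neg, neg_dotProduct, neg_neg, neg_div]

theorem PosDef.iSup_div_le_iSup_div_of_mulVec_eq {X : Matrix n n ℝ} (hX : X.PosDef)
    {D : Matrix m n ℝ} {p : m → ℝ} {s : n → ℝ} (hs : X *ᵥ s = Dᵀ *ᵥ p)
    {V : Submodule ℝ (n → ℝ)} (hsV : s ∈ V) {c : ℝ} (hc : 0 ≤ c) :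
    ⨆ v : {v : n → ℝ // v ≠ 0}, p ⬝ᵥ D *ᵥ v.1 / (√(v.1 ⬝ᵥ X *ᵥ v.1) * c) ≤
      ⨆ v : {v : n → ℝ // v ∈ V ∧ v ≠ 0}, p ⬝ᵥ D *ᵥ v.1 / (√(v.1 ⬝ᵥ X *ᵥ v.1) * c) := by
  have hXs : X.IsSymm := isHermitian_iff_isSymm.mp hX.isHermitian
  rcases hc.eq_or_lt with rfl | hc
  · simp
  have bound : ∀ v : n → ℝ, v ≠ 0 →
      p ⬝ᵥ D *ᵥ v / (√(v ⬝ᵥ X *ᵥ v) * c) ≤ √(s ⬝ᵥ X *ᵥ s) / c := by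
    intro v hv
    have hv : 0 < √(v ⬝ᵥ X *ᵥ v) := Real.sqrt_pos.mpr (hX.dotProduct_mulVec_pos hv)
    rw [div_le_div_iff₀ (by positivity) hc, dotProduct_mulVec_eq_of_mulVec_eq hXs hs,
      ← mul_assoc]
    exact mul_le_mul_of_nonneg_right (hX.posSemidef.dotProduct_mulVec_le_sqrt_mul_sqrt s v) hc.le
  refine le_trans (b := √(s ⬝ᵥ X *ᵥ s) / c)
    (Real.iSup_le (fun v => bound v.1 v.2) (by positivity)) ?_
  rcases eq_or_ne s 0 with rfl | hs0
  · simp [dotProduct_mulVec_eq_of_mulVec_eq hXs hs]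
  · refine le_ciSup_of_le ⟨_, Set.forall_mem_range.2 fun v => bound v.1 v.2.2⟩ ⟨s, hsV, hs0⟩ ?_
    rw [dotProduct_mulVec_eq_of_mulVec_eq hXs hs, ← div_div, Real.div_sqrt]

end Matrix

lemma Matrix.mulVec_ne_zero_of_linearIndependent {m ι : Type*} [Fintype ι] {P : Matrix m ι ℝ}
    (hP : LinearIndependent ℝ (fun l i => P i l)) {q : ι → ℝ} (hq : q ≠ 0) : P *ᵥ q ≠ 0 := by
  rw [← mulVec_zero P]
  exact (mulVec_injective_iff.mpr hP).ne hq

lemma Real.iSup_nonneg_of_map_eq_neg {ι : Sort*} {f : ι → ℝ} (σ : ι → ι)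
    (hσ : ∀ i, f (σ i) = -f i) : 0 ≤ ⨆ i, f i := by
  rcases isEmpty_or_nonempty ι with hι | hι
  · rw [Real.iSup_of_isEmpty]
  · obtain ⟨i⟩ := hι
    refine Real.iSup_nonneg' ?_
    rcases le_total 0 (f i) with hi | hi
    · exact ⟨i, hi⟩
    · exact ⟨σ i, by rw [hσ]; linarith⟩

theorem stmt_9_general (n m Np : ℕ)
    (X : Matrix (Fin n) (Fin n) ℝ) (hX : X.PosDef)
    (Xp : Matrix (Fin m) (Fin m) ℝ)
    (D : Matrix (Fin m) (Fin n) ℝ)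
    (Vp : Matrix (Fin m) (Fin Np) ℝ)
    (hVp : LinearIndependent ℝ (fun l : Fin Np => fun i : Fin m => Vp i l))
    (V : Submodule ℝ (Fin n → ℝ))
    (s : Fin Np → (Fin n → ℝ))
    (hs : ∀ l, X.mulVec (s l) = Dᵀ.mulVec (fun i => Vp i l))
    (hsV : ∀ l, s l ∈ V)
    (βh βN : ℝ)
    (hβh : βh = ⨅ q : {q : Fin m → ℝ // (∃ c : Fin Np → ℝ, q = Vp.mulVec c) ∧ q ≠ 0},
        ⨆ v : {v : Fin n → ℝ // v ≠ 0},
          ((q : Fin m → ℝ) ⬝ᵥ D.mulVec (v : Fin n → ℝ)) /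
            (Real.sqrt ((v : Fin n → ℝ) ⬝ᵥ X.mulVec (v : Fin n → ℝ)) *
              Real.sqrt ((q : Fin m → ℝ) ⬝ᵥ Xp.mulVec (q : Fin m → ℝ))))
    (hβN : βN = ⨅ q : {q : Fin Np → ℝ // q ≠ 0},
        ⨆ v : {v : Fin n → ℝ // v ∈ V ∧ v ≠ 0},
          ((q : Fin Np → ℝ) ⬝ᵥ (Vpᵀ * D).mulVec (v : Fin n → ℝ)) /
            (Real.sqrt ((v : Fin n → ℝ) ⬝ᵥ X.mulVec (v : Fin n → ℝ)) *
              Real.sqrt (Vp.mulVec (q : Fin Np → ℝ) ⬝ᵥ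
                Xp.mulVec (Vp.mulVec (q : Fin Np → ℝ))))) :
    βh ≤ βN := by
  subst hβh hβN
  rcases isEmpty_or_nonempty {q : Fin Np → ℝ // q ≠ 0} with hNp | hNp
  · have : IsEmpty {q : Fin m → ℝ // (∃ c : Fin Np → ℝ, q = Vp *ᵥ c) ∧ q ≠ 0} :=
      ⟨fun ⟨_, ⟨c, rfl⟩, hc⟩ => hNp.elim ⟨c, fun h => hc (by rw [h, mulVec_zero])⟩⟩
    simp only [Real.iInf_of_isEmpty, le_refl]
  refine ciInf_mono_of_forall_exists ⟨0, Set.forall_mem_range.2 fun p =>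
    Real.iSup_nonneg_of_map_eq_neg (fun v => ⟨-v.1, neg_ne_zero.2 v.2⟩)
      fun v => dotProduct_mulVec_neg_div X D p.1 _ v.1⟩ fun q =>
    ⟨⟨Vp *ᵥ q, ⟨q, rfl⟩, mulVec_ne_zero_of_linearIndependent hVp q.2⟩, ?_⟩
  simp only [dotProduct_transpose_mul_mulVec]
  exact hX.iSup_div_le_iSup_div_of_mulVec_eq (mulVec_sum_smul_of_mulVec_eq hs q)
    (V.sum_mem fun l _ => V.smul_mem _ (hsV l)) (Real.sqrt_nonneg _)

/-- supremizer enrichment preserves the inf-sup constant: if the reduced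
velocity space `V` contains all supremizers `s_l = X⁻¹ Dᵀ η_l` of the reduced pressure
modes (columns `η_l` of `V_p`), then the reduced inf-sup constant `β^N` is at least the
full-order inf-sup constant `β^h` restricted to the reduced pressure space. -/
theorem stmt_9 (n m Np : ℕ)
    (X : Matrix (Fin n) (Fin n) ℝ) (hX : X.PosDef)
    (Xp : Matrix (Fin m) (Fin m) ℝ) (hXp : Xp.PosDef)
    (D : Matrix (Fin m) (Fin n) ℝ)
    (Vp : Matrix (Fin m) (Fin Np) ℝ)
    (hVp : LinearIndependent ℝ (fun l : Fin Np => fun i : Fin m => Vp i l))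
    (V : Submodule ℝ (Fin n → ℝ))
    (s : Fin Np → (Fin n → ℝ))
    (hs : ∀ l, X.mulVec (s l) = Dᵀ.mulVec (fun i => Vp i l))
    (hsV : ∀ l, s l ∈ V)
    (βh βN : ℝ)
    (hβh : βh = ⨅ q : {q : Fin m → ℝ // (∃ c : Fin Np → ℝ, q = Vp.mulVec c) ∧ q ≠ 0},
        ⨆ v : {v : Fin n → ℝ // v ≠ 0},
          ((q : Fin m → ℝ) ⬝ᵥ D.mulVec (v : Fin n → ℝ)) /
            (Real.sqrt ((v : Fin n → ℝ) ⬝ᵥ X.mulVec (v : Fin n → ℝ)) *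
              Real.sqrt ((q : Fin m → ℝ) ⬝ᵥ Xp.mulVec (q : Fin m → ℝ))))
    (hβN : βN = ⨅ q : {q : Fin Np → ℝ // q ≠ 0},
        ⨆ v : {v : Fin n → ℝ // v ∈ V ∧ v ≠ 0},
          ((q : Fin Np → ℝ) ⬝ᵥ (Vpᵀ * D).mulVec (v : Fin n → ℝ)) /
            (Real.sqrt ((v : Fin n → ℝ) ⬝ᵥ X.mulVec (v : Fin n → ℝ)) *
              Real.sqrt (Vp.mulVec (q : Fin Np → ℝ) ⬝ᵥ
                Xp.mulVec (Vp.mulVec (q : Fin Np → ℝ))))) :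
    βh ≤ βN :=
  stmt_9_general n m Np X hX Xp D Vp hVp V s hs hsV βh βN hβh hβN
end
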